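/- Let 0 < σ₁ < σ₂, N ≥ 2, and let f_j (j=1,2) be C² solutions of f_j'' + ((N-1)/r) f_j' - (1/σ_j) f_j = 0 on (0,∞). Suppose f₁(ρ) = f₂(ρ) and σ₁ f₁'(ρ) = σ₂ f₂'(ρ) > 0 for some ρ > 0. If there exists s ∈ (0,ρ) with f₁(s) = f₂(s) and f₁(r) < f₂(r) for all r ∈ (s,ρ), then f₁'(s) < 0 and f₂'(s) < 0. -/

import Mathlib

/-!
Since `f₂ - f₁` vanishes at `s` and is positive just to the right of it, `f₁'(s) ≤ f₂'(s)`.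
The flux `r^{N-1} σ f'` of a solution satisfies `(r^{N-1} σ_j f_j')' = r^{N-1} f_j`, so the flux
difference `W = r^{N-1}(σ₁ f₁' - σ₂ f₂')` has derivative `r^{N-1}(f₁ - f₂) < 0` on `(s, ρ)` and
vanishes at `ρ`; hence `W(s) > 0`, i.e. `σ₂ f₂'(s) < σ₁ f₁'(s)`. As `σ₁ < σ₂`, the two
inequalities are compatible only if both derivatives are negative.
-/

open Set Filter Topology

theorem HasDerivAt.nonneg_of_eventually_le_right {g : ℝ → ℝ} {g' s : ℝ} (hg : HasDerivAt g g' s)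
    (hle : ∀ᶠ r in 𝓝[>] s, g s ≤ g r) : 0 ≤ g' := by
  have hslope : Tendsto (slope g s) (𝓝[>] s) (𝓝 g') :=
    hasDerivAt_iff_tendsto_slope.mp hg |>.mono_left (nhdsWithin_mono s fun r hr => ne_of_gt hr)
  refine ge_of_tendsto hslope ?_
  filter_upwards [hle, self_mem_nhdsWithin] with r hr hsr
  rw [slope_def_field]
  exact div_nonneg (sub_nonneg.mpr hr) (sub_pos.mpr hsr).le

theorem pos_of_hasDerivAt_neg_of_eq_zero {W w : ℝ → ℝ} {s ρ : ℝ} (hsρ : s < ρ)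
    (hW : ∀ r ∈ Icc s ρ, HasDerivAt W (w r) r) (hw : ∀ r ∈ Ioo s ρ, w r < 0) (hρ : W ρ = 0) :
    0 < W s := by
  have hanti : StrictAntiOn W (Icc s ρ) := by
    refine strictAntiOn_of_hasDerivWithinAt_neg (f' := w) (convex_Icc s ρ)
      (fun r hr => (hW r hr).continuousAt.continuousWithinAt) ?_ ?_ <;> rw [interior_Icc]
    · exact fun r hr => (hW r (Ioo_subset_Icc_self hr)).hasDerivWithinAt
    · exact hw
  simpa [hρ] using hanti (left_mem_Icc.mpr hsρ.le) (right_mem_Icc.mpr hsρ.le) hsρ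

/-- Radial solutions of `σ Δu = u` in dimension `c + 1`, as functions of `r = |x|`. -/
structure IsRadialSolution (σ c : ℝ) (f : ℝ → ℝ) : Prop where
  contDiffOn : ContDiffOn ℝ 2 f (Ioi 0)
  ode : ∀ r ∈ Ioi (0 : ℝ), deriv (deriv f) r + c / r * deriv f r - (1 / σ) * f r = 0

noncomputable def radialFlux (σ c : ℝ) (f : ℝ → ℝ) (r : ℝ) : ℝ :=
  r ^ c * (σ * deriv f r)

namespace IsRadialSolution

variable {σ σ₁ σ₂ c r s ρ : ℝ} {f f₁ f₂ : ℝ → ℝ}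

theorem hasDerivAt (hf : IsRadialSolution σ c f) (hr : 0 < r) : HasDerivAt f (deriv f r) r :=
  ((hf.contDiffOn.differentiableOn (by norm_num)).differentiableAt
    (isOpen_Ioi.mem_nhds hr)).hasDerivAt

theorem hasDerivAt_deriv (hf : IsRadialSolution σ c f) (hr : 0 < r) :
    HasDerivAt (deriv f) (deriv (deriv f) r) r :=
  (((hf.contDiffOn.deriv_of_isOpen (m := 1) isOpen_Ioi (by norm_num)).differentiableOn
    (by norm_num)).differentiableAt (isOpen_Ioi.mem_nhds hr)).hasDerivAt

theorem hasDerivAt_radialFlux (hf : IsRadialSolution σ c f) (hσ : σ ≠ 0) (hr : 0 < r) :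
    HasDerivAt (radialFlux σ c f) (r ^ c * f r) r := by
  have hweight : HasDerivAt (fun x : ℝ => x ^ c) (c * r ^ (c - 1)) r :=
    Real.hasDerivAt_rpow_const (Or.inl hr.ne')
  refine (hweight.mul ((hf.hasDerivAt_deriv hr).const_mul σ)).congr_deriv ?_
  have hf'' : deriv (deriv f) r = 1 / σ * f r - c / r * deriv f r := by
    linarith [hf.ode r hr]
  rw [Real.rpow_sub_one hr.ne', hf'']
  field_simp
  ring

theorem radialFlux_lt_of_lt (hf₁ : IsRadialSolution σ₁ c f₁) (hf₂ : IsRadialSolution σ₂ c f₂)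
    (hσ₁ : σ₁ ≠ 0) (hσ₂ : σ₂ ≠ 0) (hs : 0 < s) (hsρ : s < ρ)
    (hρ : radialFlux σ₁ c f₁ ρ = radialFlux σ₂ c f₂ ρ) (hlt : ∀ r ∈ Ioo s ρ, f₁ r < f₂ r) :
    radialFlux σ₂ c f₂ s < radialFlux σ₁ c f₁ s := by
  have hW : ∀ r ∈ Icc s ρ, HasDerivAt (fun x => radialFlux σ₁ c f₁ x - radialFlux σ₂ c f₂ x)
      (r ^ c * f₁ r - r ^ c * f₂ r) r := fun r hr =>
    (hf₁.hasDerivAt_radialFlux hσ₁ (hs.trans_le hr.1)).sub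
      (hf₂.hasDerivAt_radialFlux hσ₂ (hs.trans_le hr.1))
  have hneg : ∀ r ∈ Ioo s ρ, r ^ c * f₁ r - r ^ c * f₂ r < 0 := fun r hr => by
    rw [← mul_sub]
    exact mul_neg_of_pos_of_neg (Real.rpow_pos_of_pos (hs.trans hr.1) c) (sub_neg.mpr (hlt r hr))
  have hWs := pos_of_hasDerivAt_neg_of_eq_zero hsρ hW hneg (sub_eq_zero.mpr hρ)
  exact sub_pos.mp hWs

end IsRadialSolution

theorem stmt_5_general (σ₁ σ₂ : ℝ) (hσ₁ : 0 < σ₁) (hσ₁₂ : σ₁ < σ₂) (N : ℕ)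
    (f₁ f₂ : ℝ → ℝ)
    (hreg₁ : ContDiffOn ℝ 2 f₁ (Set.Ioi 0)) (hreg₂ : ContDiffOn ℝ 2 f₂ (Set.Ioi 0))
    (hode₁ : ∀ r ∈ Set.Ioi (0 : ℝ),
      deriv (deriv f₁) r + ((N : ℝ) - 1) / r * deriv f₁ r - (1 / σ₁) * f₁ r = 0)
    (hode₂ : ∀ r ∈ Set.Ioi (0 : ℝ),
      deriv (deriv f₂) r + ((N : ℝ) - 1) / r * deriv f₂ r - (1 / σ₂) * f₂ r = 0)
    (ρ : ℝ)
    (hder : σ₁ * deriv f₁ ρ = σ₂ * deriv f₂ ρ)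
    (s : ℝ) (hs : s ∈ Set.Ioo 0 ρ)
    (hvs : f₁ s = f₂ s) (hlt : ∀ r ∈ Set.Ioo s ρ, f₁ r < f₂ r) :
    deriv f₁ s < 0 ∧ deriv f₂ s < 0 := by
  obtain ⟨hs0, hsρ⟩ := hs
  have hσ₂ : 0 < σ₂ := hσ₁.trans hσ₁₂
  have hf₁ : IsRadialSolution σ₁ ((N : ℝ) - 1) f₁ := ⟨hreg₁, hode₁⟩
  have hf₂ : IsRadialSolution σ₂ ((N : ℝ) - 1) f₂ := ⟨hreg₂, hode₂⟩
  have hslope : deriv f₁ s ≤ deriv f₂ s := by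
    refine sub_nonneg.mp
      (((hf₂.hasDerivAt hs0).sub (hf₁.hasDerivAt hs0)).nonneg_of_eventually_le_right ?_)
    filter_upwards [Ioo_mem_nhdsGT hsρ] with r hr
    simpa [hvs] using (hlt r hr).le
  have hflux : σ₂ * deriv f₂ s < σ₁ * deriv f₁ s :=
    lt_of_mul_lt_mul_left (hf₁.radialFlux_lt_of_lt hf₂ hσ₁.ne' hσ₂.ne' hs0 hsρ
      (by rw [radialFlux, radialFlux, hder]) hlt) (Real.rpow_nonneg hs0.le _)
  have hd₁ : deriv f₁ s < 0 := by nlinarith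
  exact ⟨hd₁, by nlinarith⟩

theorem stmt_5 (σ₁ σ₂ : ℝ) (hσ₁ : 0 < σ₁) (hσ₁₂ : σ₁ < σ₂) (N : ℕ) (hN : 2 ≤ N)
    (f₁ f₂ : ℝ → ℝ)
    (hreg₁ : ContDiffOn ℝ 2 f₁ (Set.Ioi 0)) (hreg₂ : ContDiffOn ℝ 2 f₂ (Set.Ioi 0))
    (hode₁ : ∀ r ∈ Set.Ioi (0 : ℝ),
      deriv (deriv f₁) r + ((N : ℝ) - 1) / r * deriv f₁ r - (1 / σ₁) * f₁ r = 0)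
    (hode₂ : ∀ r ∈ Set.Ioi (0 : ℝ),
      deriv (deriv f₂) r + ((N : ℝ) - 1) / r * deriv f₂ r - (1 / σ₂) * f₂ r = 0)
    (ρ : ℝ) (hρ : 0 < ρ)
    (hval : f₁ ρ = f₂ ρ)
    (hder : σ₁ * deriv f₁ ρ = σ₂ * deriv f₂ ρ) (hpos : 0 < σ₂ * deriv f₂ ρ)
    (s : ℝ) (hs : s ∈ Set.Ioo 0 ρ)
    (hvs : f₁ s = f₂ s) (hlt : ∀ r ∈ Set.Ioo s ρ, f₁ r < f₂ r) :
    deriv f₁ s < 0 ∧ deriv f₂ s < 0 :=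
  stmt_5_general σ₁ σ₂ hσ₁ hσ₁₂ N f₁ f₂ hreg₁ hreg₂ hode₁ hode₂ ρ hder s hs hvs hlt
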